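/- arXiv:2302.12735 — 3 statements merged into one kernel-verified Lean document; each statement's English description precedes it below -/
import Mathlib

section
/- Fix α ∈ (0,1), constants κ, L_F, c, S > 0, and a constant C ≥ 0 (representing Σ_{j≠i} σ_j^{-2} from the other clients). Define J : (0,∞) → ℝ by J(σ) = (1−α)·κ·Δ(σ)·(1 + Δ(σ)/(2 L_F)) + α·c·S/σ, where Δ(σ) = (σ^{-2} + C)^{-1/2}. If J attains a local minimum at some σ̂ > 0, then σ̂ satisfies the first-order equilibrium condition κ·(1−α)·(σ̂^{-2} + C)^{-3/2}·((σ̂^{-2} + C)^{-1/2} + L_F)/L_F = α·c·S·σ̂. -/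
/-!
An interior local minimum of the differentiable cost is a critical point. Writing
`t = σ⁻² + C`, one has `Δ' = t^(-3/2) / σ³` and `(Δ (1 + Δ / (2 L)))' = Δ' (1 + Δ / L)`,
so `J'(σ̂) = 0` becomes the stated condition after multiplying through by `σ̂³ L`.
-/

theorem hasDerivAt_rpow_inv_sq_add_const {C σ : ℝ} (r : ℝ) (hσ : σ ≠ 0)
    (ht : (σ ^ 2)⁻¹ + C ≠ 0) :
    HasDerivAt (fun x : ℝ => ((x ^ 2)⁻¹ + C) ^ r)
      (-2 * r * ((σ ^ 2)⁻¹ + C) ^ (r - 1) / σ ^ 3) σ := by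
  have hsq : HasDerivAt (fun x : ℝ => (x ^ 2)⁻¹ + C) (-2 / σ ^ 3) σ :=
    (((hasDerivAt_pow 2 σ).inv (pow_ne_zero 2 hσ)).add_const C).congr_deriv (by
      field_simp; ring)
  exact (hsq.rpow_const (Or.inl ht)).congr_deriv (by ring)

theorem HasDerivAt.const_mul_mul_one_add_div {f : ℝ → ℝ} {f' x : ℝ} (a L : ℝ)
    (hf : HasDerivAt f f' x) :
    HasDerivAt (fun y => a * f y * (1 + f y / (2 * L))) (a * f' * (1 + f x / L)) x :=
  ((hf.const_mul a).mul ((hf.div_const (2 * L)).const_add 1)).congr_deriv (by ring)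

theorem stmt_4_general (α κ L_F c S C : ℝ) (hL : 0 < L_F) (hC : 0 ≤ C) (J : ℝ → ℝ)
    (hJ : ∀ σ, J σ = (1 - α) * κ * (((σ ^ 2)⁻¹ + C) ^ (-(1 / 2) : ℝ)) *
        (1 + (((σ ^ 2)⁻¹ + C) ^ (-(1 / 2) : ℝ)) / (2 * L_F)) + α * c * S / σ)
    (σh : ℝ) (hσh : 0 < σh) (hmin : IsLocalMinOn J (Set.Ioi (0 : ℝ)) σh) :
    κ * (1 - α) * (((σh ^ 2)⁻¹ + C) ^ (-(3 / 2) : ℝ)) *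
      ((((σh ^ 2)⁻¹ + C) ^ (-(1 / 2) : ℝ)) + L_F) / L_F = α * c * S * σh := by
  have hΔ := hasDerivAt_rpow_inv_sq_add_const (C := C) (-(1 / 2)) hσh.ne' (by positivity)
  have hJ' := ((hΔ.const_mul_mul_one_add_div ((1 - α) * κ) L_F).fun_add
    ((hasDerivAt_inv hσh.ne').const_mul (α * c * S)))
  simp only [← div_eq_mul_inv, ← hJ] at hJ'
  have h0 := (hmin.isLocalMin (Ioi_mem_nhds hσh)).hasDerivAt_eq_zero hJ'
  rw [show (-(1 / 2) : ℝ) - 1 = -(3 / 2) by norm_num] at h0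
  field_simp at h0 ⊢
  linear_combination h0

/-- If the individual cost `J(σ) = (1−α)·κ·Δ(σ)·(1 + Δ(σ)/(2L_F)) + α·c·S/σ`, with
`Δ(σ) = (σ^{-2} + C)^{-1/2}`, attains a local minimum on `(0,∞)` at `σh > 0`, then `σh`
satisfies the first-order equilibrium condition
`κ·(1−α)·(σh^{-2}+C)^{-3/2}·((σh^{-2}+C)^{-1/2} + L_F)/L_F = α·c·S·σh`. -/
theorem stmt_4 (α κ L_F c S C : ℝ) (hα : 0 < α) (hα1 : α < 1) (hκ : 0 < κ)
    (hL : 0 < L_F) (hc : 0 < c) (hS : 0 < S) (hC : 0 ≤ C)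
    (J : ℝ → ℝ)
    (hJ : ∀ σ, J σ = (1 - α) * κ * (((σ ^ 2)⁻¹ + C) ^ (-(1 / 2) : ℝ)) *
        (1 + (((σ ^ 2)⁻¹ + C) ^ (-(1 / 2) : ℝ)) / (2 * L_F)) + α * c * S / σ)
    (σh : ℝ) (hσh : 0 < σh) (hmin : IsLocalMinOn J (Set.Ioi (0 : ℝ)) σh) :
    κ * (1 - α) * (((σh ^ 2)⁻¹ + C) ^ (-(3 / 2) : ℝ)) *
      ((((σh ^ 2)⁻¹ + C) ^ (-(1 / 2) : ℝ)) + L_F) / L_F = α * c * S * σh :=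
  stmt_4_general α κ L_F c S C hL hC J hJ σh hσh hmin
end

section
/- Fix N ≥ 1, privacy sensitivities α_1,…,α_N ∈ (0,1), and constants κ, L_F, c, S > 0. Define the social cost SC(σ) = Σ_{i=1}^N [(1−α_i)·κ·Δ(σ)·(1 + Δ(σ)/(2 L_F)) + α_i·c·S/σ_i] on (0,∞)^N, where Δ(σ) = (Σ_{j=1}^N σ_j^{-2})^{-1/2}. If SC attains a local minimum at σ** ∈ (0,∞)^N, then for every i, κ·(Σ_{j=1}^N (1−α_j))·(Σ_{j=1}^N (σ_j**)^{-2})^{-3/2}·((Σ_{j=1}^N (σ_j**)^{-2})^{-1/2} + L_F)/L_F = α_i·c·S·σ_i**. -/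
/-!
A local minimum on the open orthant is an unconstrained local minimum, so every partial derivative
of `SC` vanishes there. Writing `SC σ = (∑ j (1 - α_j)) · L̄(x) + ∑ j α_j c S / σ_j` with the total
precision `x = ∑ j σ_j^{-2}`, the chain rule with `∂x/∂σ_i = -2 σ_i^{-3}` turns `∂SC/∂σ_i = 0`
into the claimed identity after multiplying by `σ_i^3`.
-/

open Finset Function

lemma isOpen_setOf_forall_pos {ι : Type*} [Finite ι] : IsOpen {σ : ι → ℝ | ∀ i, 0 < σ i} := by
  rw [Set.ofPred_forall]
  exact isOpen_iInter_of_finite fun i => isOpen_lt continuous_const (continuous_apply i)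

lemma IsLocalMin.comp_update {ι : Type*} [DecidableEq ι] {π : ι → Type*}
    [∀ i, TopologicalSpace (π i)] {β : Type*} [Preorder β] {F : (∀ i, π i) → β} {x : ∀ i, π i}
    (h : IsLocalMin F x) (i : ι) : IsLocalMin (fun t => F (update x i t)) (x i) :=
  IsLocalMin.comp_continuous (g := fun t => update x i t) (by rwa [update_eq_self])
    (continuous_const.update i continuous_id).continuousAt

lemma sum_apply_update {ι α M : Type*} [Fintype ι] [DecidableEq ι] [AddCommMonoid M]
    (g : ι → α → M) (σ : ι → α) (i : ι) (t : α) :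
    ∑ j, g j (update σ i t j) = g i t + ∑ j ∈ univ \ {i}, g j (σ j) := by
  simp only [apply_update g]
  exact sum_update_of_mem (mem_univ i) _ _

lemma hasDerivAt_sum_apply_update {ι : Type*} [Fintype ι] [DecidableEq ι] (g : ι → ℝ → ℝ)
    (σ : ι → ℝ) (i : ι) {g' : ℝ} (h : HasDerivAt (g i) g' (σ i)) :
    HasDerivAt (fun t => ∑ j, g j (update σ i t j)) g' (σ i) := by
  simp only [sum_apply_update]
  exact h.add_const _

/-- The loss bound `L̄^u` as a function of the total precision `x = ∑ j σ_j^{-2} = Δ^{-2}`. -/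
noncomputable def lossBoundOfPrecision (κ L_F x : ℝ) : ℝ :=
  κ * x ^ (-(1 / 2) : ℝ) * (1 + x ^ (-(1 / 2) : ℝ) / (2 * L_F))

lemma hasDerivAt_lossBoundOfPrecision (κ : ℝ) {L_F x : ℝ} (hL : L_F ≠ 0) (hx : 0 < x) :
    HasDerivAt (lossBoundOfPrecision κ L_F)
      (-(κ * x ^ (-(3 / 2) : ℝ) * (x ^ (-(1 / 2) : ℝ) + L_F) / (2 * L_F))) x := by
  have hpow : HasDerivAt (fun y : ℝ => y ^ (-(1 / 2) : ℝ)) (-(1 / 2) * x ^ (-(3 / 2) : ℝ)) x := by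
    convert Real.hasDerivAt_rpow_const (p := -(1 / 2)) (Or.inl hx.ne') using 3
    norm_num
  refine ((hpow.const_mul κ).mul ((hpow.div_const (2 * L_F)).const_add 1)).congr_deriv ?_
  field_simp
  ring

theorem stmt_5_general (N : ℕ) (α : Fin N → ℝ)
    (κ L_F c S : ℝ) (hL : 0 < L_F)
    (SC : (Fin N → ℝ) → ℝ)
    (hSC : ∀ σ, SC σ = ∑ i, ((1 - α i) * κ * ((∑ j, ((σ j) ^ 2)⁻¹) ^ (-(1 / 2) : ℝ)) *
        (1 + ((∑ j, ((σ j) ^ 2)⁻¹) ^ (-(1 / 2) : ℝ)) / (2 * L_F)) + α i * c * S / σ i))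
    (σs : Fin N → ℝ) (hpos : ∀ i, 0 < σs i)
    (hmin : IsLocalMinOn SC {σ : Fin N → ℝ | ∀ i, 0 < σ i} σs) :
    ∀ i, κ * (∑ j, (1 - α j)) * ((∑ j, ((σs j) ^ 2)⁻¹) ^ (-(3 / 2) : ℝ)) *
      (((∑ j, ((σs j) ^ 2)⁻¹) ^ (-(1 / 2) : ℝ)) + L_F) / L_F = α i * c * S * σs i := by
  intro i
  set Q := ∑ j, ((σs j) ^ 2)⁻¹ with hQ_def
  have hQ : 0 < Q := sum_pos (fun j _ => by have := hpos j; positivity) ⟨i, mem_univ i⟩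
  have hs := hpos i
  have hSC' : ∀ σ, SC σ = (∑ j, (1 - α j)) * lossBoundOfPrecision κ L_F (∑ j, ((σ j) ^ 2)⁻¹)
      + ∑ j, α j * c * S / σ j := by
    intro σ
    rw [hSC, sum_add_distrib, sum_mul, lossBoundOfPrecision]
    simp only [mul_assoc]
  have hderiv : HasDerivAt (fun t => SC (update σs i t))
      ((∑ j, (1 - α j)) * (-(κ * Q ^ (-(3 / 2) : ℝ) * (Q ^ (-(1 / 2) : ℝ) + L_F) / (2 * L_F)) *
        (-(2 * σs i) / (σs i ^ 2) ^ 2)) + α i * c * S * -(σs i ^ 2)⁻¹) (σs i) := by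
    simp only [hSC']
    refine HasDerivAt.add (HasDerivAt.const_mul _ ?_) ?_
    · refine (hasDerivAt_lossBoundOfPrecision κ hL.ne' hQ).comp_of_eq (σs i)
        (hasDerivAt_sum_apply_update (fun _ t => (t ^ 2)⁻¹) σs i ?_) (by simp [hQ_def])
      exact ((hasDerivAt_pow 2 (σs i)).inv (by positivity)).congr_deriv (by norm_num)
    · exact hasDerivAt_sum_apply_update (fun j t => α j * c * S / t) σs i
        ((hasDerivAt_inv hs.ne').const_mul _)
  have hzero := (hmin.isLocalMin (isOpen_setOf_forall_pos.mem_nhds hpos)).comp_update i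
    |>.hasDerivAt_eq_zero hderiv
  field_simp at hzero ⊢
  linear_combination hzero

/-- If the social cost `SC(σ) = ∑ i [(1−α_i)·κ·Δ(σ)·(1 + Δ(σ)/(2L_F)) + α_i·c·S/σ_i]`, with
`Δ(σ) = (∑ j σ_j^{-2})^{-1/2}`, attains a local minimum on `(0,∞)^N` at `σs`, then for every
`i`, `κ·(∑ j (1−α_j))·(∑ j σs_j^{-2})^{-3/2}·((∑ j σs_j^{-2})^{-1/2} + L_F)/L_F
= α_i·c·S·σs_i`. -/
theorem stmt_5 (N : ℕ) (hN : 1 ≤ N) (α : Fin N → ℝ) (hα : ∀ i, 0 < α i ∧ α i < 1)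
    (κ L_F c S : ℝ) (hκ : 0 < κ) (hL : 0 < L_F) (hc : 0 < c) (hS : 0 < S)
    (SC : (Fin N → ℝ) → ℝ)
    (hSC : ∀ σ, SC σ = ∑ i, ((1 - α i) * κ * ((∑ j, ((σ j) ^ 2)⁻¹) ^ (-(1 / 2) : ℝ)) *
        (1 + ((∑ j, ((σ j) ^ 2)⁻¹) ^ (-(1 / 2) : ℝ)) / (2 * L_F)) + α i * c * S / σ i))
    (σs : Fin N → ℝ) (hpos : ∀ i, 0 < σs i)
    (hmin : IsLocalMinOn SC {σ : Fin N → ℝ | ∀ i, 0 < σ i} σs) :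
    ∀ i, κ * (∑ j, (1 - α j)) * ((∑ j, ((σs j) ^ 2)⁻¹) ^ (-(3 / 2) : ℝ)) *
      (((∑ j, ((σs j) ^ 2)⁻¹) ^ (-(1 / 2) : ℝ)) + L_F) / L_F = α i * c * S * σs i :=
  stmt_5_general N α κ L_F c S hL SC hSC σs hpos hmin
end

section
/- The price of anarchy of the noise-adding game is infinite: for every M > 0 there exist N ≥ 2, α ∈ (0,1), and constants κ, L_F, c, S > 0 such that, with σ* the unique positive solution of the symmetric-equilibrium equation κ·(1−α)·N^{-3/2}·σ²·(N^{-1/2}·σ + L_F)/L_F = α·c·S and with all clients having sensitivity α, there exists a noise profile σ′ ∈ (0,∞)^N with SC(σ*, …, σ*) ≥ M · SC(σ′). In particular the ratio of the equilibrium social cost to the optimal social cost is unbounded over problem parameters. -/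
open Finset

/-- The price of anarchy of the noise-adding game is infinite: for every `M > 0` there are
parameters `N ≥ 2`, `α ∈ (0,1)`, `κ, L_F, c, S > 0`, such that with `σstar` the positive
solution of the symmetric-equilibrium equation and all clients having sensitivity `α`,
there is a noise profile `σ'` whose social cost is at most a `1/M` fraction of the
equilibrium social cost `SC(σstar, …, σstar)`. -/
theorem stmt_11 :
    ∀ M > (0 : ℝ), ∃ (N : ℕ) (α κ L_F c S σstar : ℝ) (σ' : Fin N → ℝ)
      (SC : (Fin N → ℝ) → ℝ),
      2 ≤ N ∧ 0 < α ∧ α < 1 ∧ 0 < κ ∧ 0 < L_F ∧ 0 < c ∧ 0 < S ∧ 0 < σstar ∧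
      κ * (1 - α) * (N : ℝ) ^ (-(3 / 2) : ℝ) * σstar ^ 2 *
        ((N : ℝ) ^ (-(1 / 2) : ℝ) * σstar + L_F) / L_F = α * c * S ∧
      (∀ i, 0 < σ' i) ∧
      (∀ σ : Fin N → ℝ, SC σ =
        ∑ i, ((1 - α) * κ * ((∑ j, ((σ j) ^ 2)⁻¹) ^ (-(1 / 2) : ℝ)) *
          (1 + ((∑ j, ((σ j) ^ 2)⁻¹) ^ (-(1 / 2) : ℝ)) / (2 * L_F)) + α * c * S / σ i)) ∧
      M * SC σ' ≤ SC (fun _ => σstar) := by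
  intro M hM
  obtain ⟨N, hN2, hNx⟩ : ∃ N : ℕ, 2 ≤ N ∧ 16 * M ^ 2 ≤ (N : ℝ) := by
    refine ⟨⌈16 * M ^ 2⌉₊ + 2, Nat.le_add_left 2 _, ?_⟩
    push_cast
    have := Nat.le_ceil (16 * M ^ 2)
    linarith
  obtain ⟨x, hxdef⟩ : ∃ x : ℝ, x = (N : ℝ) := ⟨_, rfl⟩
  rw [← hxdef] at hNx
  have hx2 : (2 : ℝ) ≤ x := by rw [hxdef]; exact_mod_cast hN2
  have hx : (0 : ℝ) < x := by linarith
  have hx1 : (1 : ℝ) ≤ x := by linarith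
  obtain ⟨B, hBdef⟩ : ∃ B : ℝ, B = x ^ (-(1/2) : ℝ) := ⟨_, rfl⟩
  have hB : 0 < B := hBdef ▸ Real.rpow_pos_of_pos hx _
  have hB1 : B ≤ 1 := hBdef ▸ Real.rpow_le_one_of_one_le_of_nonpos hx1 (by norm_num)
  obtain ⟨S, hSdef⟩ : ∃ S : ℝ, S = x⁻¹ * B * (B + 1) := ⟨_, rfl⟩
  have hS : 0 < S := by rw [hSdef]; positivity
  -- rpow computations
  have hBt : B * x ^ ((1/2) : ℝ) = 1 := by
    rw [hBdef, ← Real.rpow_add hx]; norm_num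
  have h32 : x ^ (-(3/2) : ℝ) = x⁻¹ * B := by
    have := Real.rpow_add hx (-1) (-(1/2))
    norm_num [Real.rpow_neg_one] at this
    rw [hBdef]; exact this
  have hB2 : B ^ 2 = x⁻¹ := by
    rw [hBdef, ← Real.rpow_natCast (x ^ (-(1/2):ℝ)) 2, ← Real.rpow_mul hx.le]
    norm_num [Real.rpow_neg_one]
  have hxx : (x * x) ^ (-(1/2) : ℝ) = x⁻¹ := by
    rw [← sq, ← Real.rpow_natCast x 2, ← Real.rpow_mul hx.le]
    norm_num [Real.rpow_neg_one]
  have h4M : 4 * M ≤ x ^ ((1/2) : ℝ) := by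
    rw [← Real.sqrt_eq_rpow]
    rw [show (4:ℝ) * M = Real.sqrt ((4*M)^2) from (Real.sqrt_sq (by positivity)).symm]
    exact Real.sqrt_le_sqrt (by nlinarith)
  refine ⟨N, 1/2, 1, 1, 1, S, 1, (fun _ => B),
    (fun σ => ∑ i, ((1 - 1/2) * 1 * ((∑ j, ((σ j) ^ 2)⁻¹) ^ (-(1 / 2) : ℝ)) *
          (1 + ((∑ j, ((σ j) ^ 2)⁻¹) ^ (-(1 / 2) : ℝ)) / (2 * 1)) + 1/2 * 1 * S / σ i)),
    hN2, by norm_num, by norm_num, one_pos, one_pos, one_pos, hS, one_pos, ?_,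
    fun i => hB, fun σ => rfl, ?_⟩
  · -- equilibrium equation
    rw [← hxdef, h32, ← hBdef, hSdef]
    ring
  · -- main inequality
    have hsum1 : (∑ j : Fin N, (((1:ℝ)) ^ 2)⁻¹) = x := by
      simp [hxdef]
    have hsumB : (∑ j : Fin N, ((B) ^ 2)⁻¹) = x * x := by
      rw [Finset.sum_const, Finset.card_univ, Fintype.card_fin, hB2, inv_inv,
        nsmul_eq_mul, ← hxdef]
    beta_reduce
    rw [hsum1, hsumB, hxx, Finset.sum_const, Finset.sum_const, Finset.card_univ,
      Fintype.card_fin, nsmul_eq_mul, nsmul_eq_mul, ← hxdef, ← hBdef]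
    have hxinv : x⁻¹ ≤ 1/2 := by
      rw [inv_le_comm₀ (by positivity) (by norm_num)]; simpa using hx2
    have hxxinv : x * x⁻¹ = 1 := mul_inv_cancel₀ (ne_of_gt hx)
    have hL : x * ((1 - 1/2) * 1 * x⁻¹ * (1 + x⁻¹ / (2 * 1)) + 1/2 * 1 * S / B) =
        (1/2) * (1 + x⁻¹/2) + (1/2) * (B + 1) := by
      rw [hSdef]
      field_simp
      ring
    have hLle : x * ((1 - 1/2) * 1 * x⁻¹ * (1 + x⁻¹ / (2 * 1)) + 1/2 * 1 * S / B) ≤ 2 := by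
      rw [hL]
      linarith
    have hRge : x ^ ((1/2) : ℝ) / 2 ≤
        x * ((1 - 1/2) * 1 * B * (1 + B / (2 * 1)) + 1/2 * 1 * S / 1) := by
      have hxB : x * B = x ^ ((1/2) : ℝ) := by
        rw [hBdef]
        nth_rewrite 1 [← Real.rpow_one x]
        rw [← Real.rpow_add hx]; norm_num
      rw [← hxB]
      nlinarith [mul_pos hx hS, hB.le, hx.le, hS.le,
        mul_nonneg (mul_nonneg hx.le hB.le) hB.le]
    calc M * (x * ((1 - 1/2) * 1 * x⁻¹ * (1 + x⁻¹ / (2 * 1)) + 1/2 * 1 * S / B))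
        ≤ M * 2 := mul_le_mul_of_nonneg_left hLle hM.le
      _ ≤ x ^ ((1/2) : ℝ) / 2 := by linarith
      _ ≤ _ := hRge
end
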